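/- Fix γ > 0 and assume: (kernel regularity) k_θ(x|z) + ‖∇_{(θ,x,z)} k_θ(x|z)‖ ≤ B_k and ‖∇_x k_θ(x|z) − ∇_x k_{θ'}(x'|z')‖ ≤ K_k ‖(θ, x, z) − (θ', x', z')‖; (reparameterization regularity) there exist a_φ ≥ 0, b_φ > 0 with ‖∇_{(θ,z)} φ_θ(z, ε)‖_F ≤ a_φ‖ε‖ + b_φ for all (θ, z, ε). Define s^γ_{θ,r}(z, ε) := ∇_x log(q_{θ,r}(x) + γ) evaluated at x = φ_θ(z, ε), where q_{θ,r}(x) := ∫ k_θ(x|z) r(dz). Then there exist constants a_s, b_s > 0 such that for all θ, θ', z, z', ε and all probability measures r, r' with finite first moment: ‖s^γ_{θ,r}(z, ε) − s^γ_{θ',r'}(z', ε)‖ ≤ (a_s‖ε‖ + b_s)(‖(θ, z) − (θ', z')‖ + W₁(r, r')). -/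

import Mathlib

open MeasureTheory Filter Topology
open scoped ENNReal NNReal

/-- Shorthand for Euclidean space `ℝ^n`. -/
abbrev Esp (n : ℕ) : Type := EuclideanSpace ℝ (Fin n)

/-- The Wasserstein-1 cost between two measures: the infimum over couplings `π` (measures on the
product with the given marginals) of `∫ ‖z − z'‖ dπ(z, z')`. -/
noncomputable def W1 {E : Type*} [MeasurableSpace E] [NormedAddCommGroup E]
    (r r' : Measure E) : ℝ≥0∞ :=
  ⨅ π : {π : Measure (E × E) // π.map Prod.fst = r ∧ π.map Prod.snd = r'},
    ∫⁻ p, (‖p.1 - p.2‖₊ : ℝ≥0∞) ∂π.1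

/-- The semi-implicit density `q_{θ,r}(x) = ∫ k_θ(x|z) r(dz)`. -/
noncomputable def qdens {dθ dx dz : ℕ} (k : Esp dθ → Esp dx → Esp dz → ℝ)
    (θ : Esp dθ) (r : Measure (Esp dz)) (x : Esp dx) : ℝ :=
  ∫ z, k θ x z ∂r

/-- The `γ`-regularized score `s^γ_{θ,r}(z, ε) = ∇_x log(q_{θ,r}(x) + γ)` at `x = φ_θ(z, ε)`. -/
noncomputable def sGamma {dθ dx dz : ℕ} (γ : ℝ) (k : Esp dθ → Esp dx → Esp dz → ℝ)
    (φ : Esp dθ → Esp dz → Esp dx → Esp dx)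
    (θ : Esp dθ) (r : Measure (Esp dz)) (z : Esp dz) (ε : Esp dx) : Esp dx :=
  gradient (fun x => Real.log (qdens k θ r x + γ)) (φ θ z ε)

/-!
The score is `∇q / (q + γ)` evaluated at `x = φ_θ(z, ε)`. Both `q_{θ,r}(x)` and
`∇_x q_{θ,r}(x) = ∫ ∇_x k_θ(x|z) r(dz)` are integrals of functions that are Lipschitz in `(θ, x)`
and in `z`. A change of `(θ, x)` is controlled pointwise under the integral; a change of `r` is
controlled by integrating the Lipschitz bound in `z` against an arbitrary coupling of `r` and `r'`,
which gives the easy half of Kantorovich–Rubinstein duality. Since `q + γ ≥ γ` and `‖∇q‖ ≤ B_k`,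
the quotient is then Lipschitz with constant `K_k/γ + B_k²/γ²` in `(θ, x)` and `r`, and `φ` is
`(a_φ‖ε‖ + b_φ)`-Lipschitz in `(θ, z)` by the mean value inequality.
-/

section Wasserstein

variable {E F : Type*} [MeasurableSpace E] [NormedAddCommGroup E]
  [NormedAddCommGroup F] [NormedSpace ℝ F]

lemma W1_le_lintegral {r r' : Measure E} (π : Measure (E × E)) (h₁ : π.map Prod.fst = r)
    (h₂ : π.map Prod.snd = r') : W1 r r' ≤ ∫⁻ p, ‖p.1 - p.2‖ₑ ∂π :=
  iInf_le (fun π : {π : Measure (E × E) // π.map Prod.fst = r ∧ π.map Prod.snd = r'} =>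
    ∫⁻ p, ‖p.1 - p.2‖ₑ ∂π.1) ⟨π, h₁, h₂⟩

lemma W1_ne_top [OpensMeasurableSpace E] {r r' : Measure E} [IsProbabilityMeasure r]
    [IsProbabilityMeasure r'] (hr : ∫⁻ w, ‖w‖ₑ ∂r < ⊤) (hr' : ∫⁻ w, ‖w‖ₑ ∂r' < ⊤) :
    W1 r r' ≠ ⊤ := by
  have h₁ : (r.prod r').map Prod.fst = r := by simp
  have h₂ : (r.prod r').map Prod.snd = r' := by simp
  refine ne_top_of_le_ne_top (ENNReal.add_ne_top.2 ⟨hr.ne, hr'.ne⟩)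
    ((W1_le_lintegral _ h₁ h₂).trans ?_)
  calc ∫⁻ p, ‖p.1 - p.2‖ₑ ∂(r.prod r')
      ≤ ∫⁻ p, ‖p.1‖ₑ + ‖p.2‖ₑ ∂(r.prod r') := lintegral_mono fun p => enorm_sub_le
    _ = ∫⁻ w, ‖w‖ₑ ∂r + ∫⁻ w, ‖w‖ₑ ∂r' := by
      rw [lintegral_add_left measurable_fst.enorm, ← lintegral_map measurable_enorm measurable_fst,
        ← lintegral_map measurable_enorm measurable_snd, h₁, h₂]

lemma norm_integral_sub_le_mul_W1 {f : E → F} {L : ℝ≥0} (hf : LipschitzWith L f)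
    {r r' : Measure E} (hr : Integrable f r) (hr' : Integrable f r') (hW : W1 r r' ≠ ⊤) :
    ‖∫ z, f z ∂r - ∫ z, f z ∂r'‖ ≤ L * (W1 r r').toReal := by
  have : Nonempty {π : Measure (E × E) // π.map Prod.fst = r ∧ π.map Prod.snd = r'} := by
    by_contra h
    exact hW (by rw [not_nonempty_iff] at h; simp [W1])
  suffices ‖∫ z, f z ∂r - ∫ z, f z ∂r'‖ₑ ≤ L * W1 r r' by
    simpa [toReal_enorm] using ENNReal.toReal_mono (ENNReal.mul_ne_top ENNReal.coe_ne_top hW) this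
  rw [W1, ENNReal.mul_iInf (by simp)]
  refine le_iInf fun ⟨π, h₁, h₂⟩ => ?_
  subst h₁ h₂
  calc ‖∫ z, f z ∂(π.map Prod.fst) - ∫ z, f z ∂(π.map Prod.snd)‖ₑ
      = ‖∫ p, (f p.1 - f p.2) ∂π‖ₑ := by
        rw [integral_map measurable_fst.aemeasurable hr.aestronglyMeasurable,
          integral_map measurable_snd.aemeasurable hr'.aestronglyMeasurable]
        exact congrArg _ (integral_sub (hr.comp_measurable measurable_fst)
          (hr'.comp_measurable measurable_snd)).symm
    _ ≤ ∫⁻ p, ‖f p.1 - f p.2‖ₑ ∂π := enorm_integral_le_lintegral_enorm _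
    _ ≤ ∫⁻ p, L * ‖p.1 - p.2‖ₑ ∂π := lintegral_mono fun p => by
        simpa only [edist_eq_enorm_sub] using hf.edist_le_mul p.1 p.2
    _ = L * ∫⁻ p, ‖p.1 - p.2‖ₑ ∂π := lintegral_const_mul' _ _ ENNReal.coe_ne_top

lemma norm_integral_sub_integral_le [OpensMeasurableSpace E] [SecondCountableTopology E]
    {P : Type*} [SeminormedAddCommGroup P] {g : P → E → F} {L : ℝ≥0} {C : ℝ}
    (hg : LipschitzWith L (Function.uncurry g)) (hC : ∀ p z, ‖g p z‖ ≤ C)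
    {r r' : Measure E} [IsProbabilityMeasure r] [IsFiniteMeasure r'] (hW : W1 r r' ≠ ⊤)
    (p p' : P) :
    ‖∫ z, g p z ∂r - ∫ z, g p' z ∂r'‖ ≤ L * (‖p - p'‖ + (W1 r r').toReal) := by
  have hg_meas (q : P) : LipschitzWith L (g q) := by
    simpa [Function.comp_def] using hg.comp (LipschitzWith.prodMk_left q)
  have hint (q : P) (μ : Measure E) [IsFiniteMeasure μ] : Integrable (g q) μ :=
    .of_bound (hg_meas q).continuous.aestronglyMeasurable C (ae_of_all _ (hC q))
  have hparam : ‖∫ z, g p z ∂r - ∫ z, g p' z ∂r‖ ≤ L * ‖p - p'‖ := by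
    rw [← integral_sub (hint p r) (hint p' r)]
    simpa using norm_integral_le_of_norm_le_const (μ := r) <| ae_of_all _ fun z => by
      simpa [dist_eq_norm] using (hg.comp (LipschitzWith.prodMk_right z)).dist_le_mul p p'
  calc ‖∫ z, g p z ∂r - ∫ z, g p' z ∂r'‖
      ≤ ‖∫ z, g p z ∂r - ∫ z, g p' z ∂r‖ + ‖∫ z, g p' z ∂r - ∫ z, g p' z ∂r'‖ :=
        norm_sub_le_norm_sub_add_norm_sub _ _ _
    _ ≤ L * ‖p - p'‖ + L * (W1 r r').toReal :=
        add_le_add hparam (norm_integral_sub_le_mul_W1 (hg_meas p') (hint _ _) (hint _ _) hW)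
    _ = L * (‖p - p'‖ + (W1 r r').toReal) := by ring

end Wasserstein

lemma norm_inv_smul_sub_inv_smul_le {V : Type*} [SeminormedAddCommGroup V] [NormedSpace ℝ V]
    {γ a b : ℝ} (hγ : 0 < γ) (ha : γ ≤ a) (hb : γ ≤ b) (u v : V) :
    ‖a⁻¹ • u - b⁻¹ • v‖ ≤ γ⁻¹ * ‖u - v‖ + |a - b| / γ ^ 2 * ‖v‖ := by
  have ha₀ : 0 < a := hγ.trans_le ha
  have hb₀ : 0 < b := hγ.trans_le hb
  have hinv : |a⁻¹ - b⁻¹| ≤ |a - b| / γ ^ 2 := by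
    rw [inv_sub_inv ha₀.ne' hb₀.ne', abs_div, abs_sub_comm, abs_of_pos (mul_pos ha₀ hb₀)]
    gcongr
    nlinarith
  calc ‖a⁻¹ • u - b⁻¹ • v‖ = ‖a⁻¹ • (u - v) + (a⁻¹ - b⁻¹) • v‖ := by
        rw [smul_sub, sub_smul, sub_add_sub_cancel]
    _ ≤ a⁻¹ * ‖u - v‖ + |a⁻¹ - b⁻¹| * ‖v‖ := by
        refine (norm_add_le _ _).trans_eq ?_
        rw [norm_smul, norm_smul, Real.norm_of_nonneg (inv_nonneg.2 ha₀.le), Real.norm_eq_abs]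
    _ ≤ γ⁻¹ * ‖u - v‖ + |a - b| / γ ^ 2 * ‖v‖ := by
        gcongr

lemma LipschitzWith.uncurry_prodAssoc {α β γ δ : Type*} [PseudoEMetricSpace α]
    [PseudoEMetricSpace β] [PseudoEMetricSpace γ] [PseudoEMetricSpace δ] {L : ℝ≥0}
    {f : α × β × γ → δ} (hf : LipschitzWith L f) :
    LipschitzWith L (Function.uncurry fun (p : α × β) (c : γ) => f (p.1, p.2, c)) :=
  fun p q => (hf (p.1.1, p.1.2, p.2) (q.1.1, q.1.2, q.2)).trans_eq <| by
    simp [Prod.edist_eq, max_assoc]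

lemma LipschitzWith.norm_sub_fst_prodMk_le {α β γ : Type*} [SeminormedAddCommGroup α]
    [SeminormedAddCommGroup β] [SeminormedAddCommGroup γ] {c : ℝ≥0} {f : α × β → γ}
    (hf : LipschitzWith c f) (p q : α × β) :
    ‖((p.1, f p) : α × γ) - (q.1, f q)‖ ≤ (1 + c) * ‖p - q‖ := by
  have := (LipschitzWith.prod_fst.prodMk hf).dist_le_mul p q
  rw [dist_eq_norm, dist_eq_norm] at this
  refine this.trans (mul_le_mul_of_nonneg_right ?_ (norm_nonneg _))
  exact max_le (le_add_of_nonneg_right c.2) (le_add_of_nonneg_left zero_le_one)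

lemma norm_gradient_le_of_lipschitzWith {F : Type*} [NormedAddCommGroup F]
    [InnerProductSpace ℝ F] [CompleteSpace F] {f : F → ℝ} {C : ℝ≥0} (hf : LipschitzWith C f)
    (x : F) : ‖gradient f x‖ ≤ C := by
  rw [gradient, LinearIsometryEquiv.norm_map]
  exact norm_fderiv_le_of_lipschitz ℝ hf

noncomputable def gradX {dθ dx dz : ℕ} (k : Esp dθ → Esp dx → Esp dz → ℝ) (θ : Esp dθ)
    (x : Esp dx) (z : Esp dz) : Esp dx :=
  gradient (fun y => k θ y z) x

section Kernel

variable {dθ dx dz : ℕ} {k : Esp dθ → Esp dx → Esp dz → ℝ} {B K : ℝ≥0}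

lemma norm_gradX_le
    (hk_lip : LipschitzWith B (fun p : Esp dθ × Esp dx × Esp dz => k p.1 p.2.1 p.2.2))
    (θ : Esp dθ) (x : Esp dx) (z : Esp dz) : ‖gradX k θ x z‖ ≤ B := by
  have := hk_lip.comp ((LipschitzWith.prodMk_left θ).comp (LipschitzWith.prodMk_right z))
  rw [mul_one, mul_one] at this
  exact norm_gradient_le_of_lipschitzWith this x

lemma hasGradientAt_qdens
    (hk_diff : Differentiable ℝ (fun p : Esp dθ × Esp dx × Esp dz => k p.1 p.2.1 p.2.2))
    (hk_lip : LipschitzWith B (fun p : Esp dθ × Esp dx × Esp dz => k p.1 p.2.1 p.2.2))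
    (hk_norm : ∀ θ x z, ‖k θ x z‖ ≤ B) (hgrad_cont : ∀ θ x, Continuous (gradX k θ x))
    (θ : Esp dθ) (r : Measure (Esp dz)) [IsProbabilityMeasure r] (x : Esp dx) :
    HasGradientAt (qdens k θ r) (∫ z, gradX k θ x z ∂r) x := by
  have hk_cont (y : Esp dx) : Continuous (k θ y) :=
    hk_diff.continuous.comp (by fun_prop : Continuous fun z => (θ, y, z))
  have hk_x (y : Esp dx) (z : Esp dz) : HasGradientAt (fun y => k θ y z) (gradX k θ y z) y := by
    have := (hk_diff (θ, y, z)).comp y (by fun_prop : DifferentiableAt ℝ (fun y => (θ, y, z)) y)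
    exact this.hasGradientAt
  have hcomm : ∫ z, InnerProductSpace.toDual ℝ (Esp dx) (gradX k θ x z) ∂r
      = InnerProductSpace.toDual ℝ (Esp dx) (∫ z, gradX k θ x z ∂r) :=
    (InnerProductSpace.toDual ℝ (Esp dx)).toLinearIsometry.integral_comp_comm _
  rw [hasGradientAt_iff_hasFDerivAt, ← hcomm]
  refine hasFDerivAt_integral_of_dominated_of_fderiv_le (bound := fun _ => (B : ℝ)) univ_mem
    (.of_forall fun y => (hk_cont y).aestronglyMeasurable)
    (.of_bound (hk_cont x).aestronglyMeasurable B (ae_of_all _ (hk_norm θ x)))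
    ((InnerProductSpace.toDual ℝ (Esp dx)).continuous.comp (hgrad_cont θ x)).aestronglyMeasurable
    (ae_of_all _ fun z y _ => ?_) (integrable_const _)
    (ae_of_all _ fun z y _ => hasGradientAt_iff_hasFDerivAt.1 (hk_x y z))
  simpa using norm_gradX_le hk_lip θ y z

lemma gradient_log_qdens_add {γ : ℝ} (hγ : 0 < γ) (hk_nonneg : ∀ θ x z, 0 ≤ k θ x z)
    (hk_diff : Differentiable ℝ (fun p : Esp dθ × Esp dx × Esp dz => k p.1 p.2.1 p.2.2))
    (hk_lip : LipschitzWith B (fun p : Esp dθ × Esp dx × Esp dz => k p.1 p.2.1 p.2.2))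
    (hk_norm : ∀ θ x z, ‖k θ x z‖ ≤ B) (hgrad_cont : ∀ θ x, Continuous (gradX k θ x))
    (θ : Esp dθ) (r : Measure (Esp dz)) [IsProbabilityMeasure r] (x : Esp dx) :
    gradient (fun y => Real.log (qdens k θ r y + γ)) x
      = (qdens k θ r x + γ)⁻¹ • ∫ z, gradX k θ x z ∂r := by
  have hpos : 0 < qdens k θ r x + γ :=
    add_pos_of_nonneg_of_pos (integral_nonneg (hk_nonneg θ x)) hγ
  have hq := hasGradientAt_iff_hasFDerivAt.1
    (hasGradientAt_qdens hk_diff hk_lip hk_norm hgrad_cont θ r x)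
  refine HasGradientAt.gradient (hasGradientAt_iff_hasFDerivAt.2 ?_)
  rw [map_smul]
  exact (hq.add_const γ).log hpos.ne'

lemma norm_sGamma_sub_le {γ : ℝ} (hγ : 0 < γ) (hk_nonneg : ∀ θ x z, 0 ≤ k θ x z)
    (hk_le : ∀ θ x z, k θ x z ≤ B)
    (hk_diff : Differentiable ℝ (fun p : Esp dθ × Esp dx × Esp dz => k p.1 p.2.1 p.2.2))
    (hk_lip : LipschitzWith B (fun p : Esp dθ × Esp dx × Esp dz => k p.1 p.2.1 p.2.2))
    (hgrad_lip : LipschitzWith K (fun p : Esp dθ × Esp dx × Esp dz => gradX k p.1 p.2.1 p.2.2))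
    (φ : Esp dθ → Esp dz → Esp dx → Esp dx) (θ θ' : Esp dθ) (z z' : Esp dz) (ε : Esp dx)
    (r r' : Measure (Esp dz)) [IsProbabilityMeasure r] [IsProbabilityMeasure r']
    (hW : W1 r r' ≠ ⊤) :
    ‖sGamma γ k φ θ r z ε - sGamma γ k φ θ' r' z' ε‖ ≤ (K / γ + B ^ 2 / γ ^ 2) *
      (‖((θ, φ θ z ε) : Esp dθ × Esp dx) - (θ', φ θ' z' ε)‖ + (W1 r r').toReal) := by
  set x := φ θ z ε
  set x' := φ θ' z' ε
  set D := ‖((θ, x) : Esp dθ × Esp dx) - (θ', x')‖ + (W1 r r').toReal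
  have hk_norm (θ x z) : ‖k θ x z‖ ≤ B := by
    rw [Real.norm_of_nonneg (hk_nonneg θ x z)]
    exact hk_le θ x z
  have hgrad_cont (θ x) : Continuous (gradX k θ x) :=
    hgrad_lip.continuous.comp (by fun_prop : Continuous fun z => (θ, x, z))
  have hq : ‖qdens k θ r x - qdens k θ' r' x'‖ ≤ B * D :=
    norm_integral_sub_integral_le (g := fun (p : Esp dθ × Esp dx) z => k p.1 p.2 z)
      hk_lip.uncurry_prodAssoc (fun p => hk_norm p.1 p.2) hW (θ, x) (θ', x')
  have hgrad : ‖∫ z, gradX k θ x z ∂r - ∫ z, gradX k θ' x' z ∂r'‖ ≤ K * D :=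
    norm_integral_sub_integral_le (g := fun (p : Esp dθ × Esp dx) z => gradX k p.1 p.2 z)
      hgrad_lip.uncurry_prodAssoc (fun p => norm_gradX_le hk_lip p.1 p.2) hW (θ, x) (θ', x')
  have hgrad' : ‖∫ z, gradX k θ' x' z ∂r'‖ ≤ B := by
    simpa using norm_integral_le_of_norm_le_const (μ := r')
      (ae_of_all _ (norm_gradX_le hk_lip θ' x'))
  have hγq (θ : Esp dθ) (r : Measure (Esp dz)) (x : Esp dx) : γ ≤ qdens k θ r x + γ :=
    le_add_of_nonneg_left (integral_nonneg (hk_nonneg θ x))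
  rw [sGamma, sGamma, gradient_log_qdens_add hγ hk_nonneg hk_diff hk_lip hk_norm hgrad_cont,
    gradient_log_qdens_add hγ hk_nonneg hk_diff hk_lip hk_norm hgrad_cont]
  calc _ ≤ γ⁻¹ * ‖∫ z, gradX k θ x z ∂r - ∫ z, gradX k θ' x' z ∂r'‖
        + |qdens k θ r x + γ - (qdens k θ' r' x' + γ)| / γ ^ 2 * ‖∫ z, gradX k θ' x' z ∂r'‖ :=
        norm_inv_smul_sub_inv_smul_le hγ (hγq θ r x) (hγq θ' r' x') _ _
    _ ≤ γ⁻¹ * (K * D) + B * D / γ ^ 2 * B := by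
        rw [add_sub_add_right_eq_sub, ← Real.norm_eq_abs]
        gcongr
    _ = (K / γ + B ^ 2 / γ ^ 2) * D := by ring

end Kernel

/-- Lipschitz continuity of the `γ`-regularized score: under boundedness and Lipschitz-gradient
regularity of the kernel and a linear-growth bound on `∇_{(θ,z)} φ`, there are `a_s, b_s > 0` with
`‖s^γ_{θ,r}(z,ε) − s^γ_{θ',r'}(z',ε)‖ ≤ (a_s‖ε‖ + b_s)(‖(θ,z) − (θ',z')‖ + W₁(r, r'))`. -/
theorem score_gamma_lipschitz {dθ dx dz : ℕ} (γ : ℝ) (hγ : 0 < γ)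
    (Bk Kk : ℝ) (hBk : 0 < Bk) (hKk : 0 < Kk)
    (k : Esp dθ → Esp dx → Esp dz → ℝ)
    (hk_nonneg : ∀ θ x z, 0 ≤ k θ x z)
    (hk_diff : Differentiable ℝ (fun p : Esp dθ × Esp dx × Esp dz => k p.1 p.2.1 p.2.2))
    (hk_bdd : ∀ (θ : Esp dθ) (x : Esp dx) (z : Esp dz),
      k θ x z + ‖fderiv ℝ (fun p : Esp dθ × Esp dx × Esp dz => k p.1 p.2.1 p.2.2) (θ, x, z)‖ ≤ Bk)
    (hk_gradlip : ∀ (θ θ' : Esp dθ) (x x' : Esp dx) (z z' : Esp dz),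
      ‖gradient (fun y => k θ y z) x - gradient (fun y => k θ' y z') x'‖ ≤
        Kk * ‖((θ, x, z) : Esp dθ × Esp dx × Esp dz) - (θ', x', z')‖)
    (φ : Esp dθ → Esp dz → Esp dx → Esp dx)
    (aφ bφ : ℝ) (haφ : 0 ≤ aφ) (hbφ : 0 < bφ)
    (hφ_diff : ∀ ε, Differentiable ℝ (fun p : Esp dθ × Esp dz => φ p.1 p.2 ε))
    (hφ_bdd : ∀ (θ : Esp dθ) (z : Esp dz) (ε : Esp dx),
      ‖fderiv ℝ (fun p : Esp dθ × Esp dz => φ p.1 p.2 ε) (θ, z)‖ ≤ aφ * ‖ε‖ + bφ) :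
    ∃ as bs : ℝ, 0 < as ∧ 0 < bs ∧
      ∀ (θ θ' : Esp dθ) (z z' : Esp dz) (ε : Esp dx)
        (r r' : Measure (Esp dz)),
        IsProbabilityMeasure r → IsProbabilityMeasure r' →
        (∫⁻ w, (‖w‖₊ : ℝ≥0∞) ∂r) < ⊤ → (∫⁻ w, (‖w‖₊ : ℝ≥0∞) ∂r') < ⊤ →
        ‖sGamma γ k φ θ r z ε - sGamma γ k φ θ' r' z' ε‖ ≤
          (as * ‖ε‖ + bs) * (‖((θ, z) : Esp dθ × Esp dz) - (θ', z')‖ + (W1 r r').toReal) := by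
  set B : ℝ≥0 := ⟨Bk, hBk.le⟩
  have hk_le (θ x z) : k θ x z ≤ B := (le_add_of_nonneg_right (norm_nonneg _)).trans (hk_bdd θ x z)
  have hk_lip : LipschitzWith B (fun p : Esp dθ × Esp dx × Esp dz => k p.1 p.2.1 p.2.2) :=
    lipschitzWith_of_nnnorm_fderiv_le hk_diff fun p =>
      (le_add_of_nonneg_left (hk_nonneg p.1 p.2.1 p.2.2)).trans (hk_bdd p.1 p.2.1 p.2.2)
  have hgrad_lip : LipschitzWith ⟨Kk, hKk.le⟩
      (fun p : Esp dθ × Esp dx × Esp dz => gradX k p.1 p.2.1 p.2.2) :=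
    .of_dist_le_mul fun p p' => by
      rw [dist_eq_norm, dist_eq_norm]
      exact hk_gradlip p.1 p'.1 p.2.1 p'.2.1 p.2.2 p'.2.2
  set C := Kk / γ + Bk ^ 2 / γ ^ 2
  refine ⟨C * (aφ + 1), C * (bφ + 1), by positivity, by positivity,
    fun θ θ' z z' ε r r' _ _ hr hr' => ?_⟩
  set c := aφ * ‖ε‖ + bφ
  have hφ_lip : LipschitzWith ⟨c, by positivity⟩ (fun p : Esp dθ × Esp dz => φ p.1 p.2 ε) :=
    lipschitzWith_of_nnnorm_fderiv_le (hφ_diff ε) fun p => hφ_bdd p.1 p.2 ε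
  have hx : ‖((θ, φ θ z ε) : Esp dθ × Esp dx) - (θ', φ θ' z' ε)‖
      ≤ (1 + c) * ‖((θ, z) : Esp dθ × Esp dz) - (θ', z')‖ :=
    hφ_lip.norm_sub_fst_prodMk_le (θ, z) (θ', z')
  calc ‖sGamma γ k φ θ r z ε - sGamma γ k φ θ' r' z' ε‖
      ≤ C * (‖((θ, φ θ z ε) : Esp dθ × Esp dx) - (θ', φ θ' z' ε)‖ + (W1 r r').toReal) :=
        norm_sGamma_sub_le hγ hk_nonneg hk_le hk_diff hk_lip hgrad_lip φ θ θ' z z' ε r r'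
          (W1_ne_top hr hr')
    _ ≤ C * ((1 + c) * (‖((θ, z) : Esp dθ × Esp dz) - (θ', z')‖ + (W1 r r').toReal)) := by
        gcongr
        linarith [mul_nonneg (show 0 ≤ c by positivity) (ENNReal.toReal_nonneg (a := W1 r r'))]
    _ = C * (1 + c) * (‖((θ, z) : Esp dθ × Esp dz) - (θ', z')‖ + (W1 r r').toReal) := by ring
    _ ≤ (C * (aφ + 1) * ‖ε‖ + C * (bφ + 1)) *
          (‖((θ, z) : Esp dθ × Esp dz) - (θ', z')‖ + (W1 r r').toReal) := by
        gcongr ?_ * _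
        nlinarith [norm_nonneg ε, show 0 < C by positivity]
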